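/- arXiv:2103.16598 — 2 statements merged into one kernel-verified Lean document; each statement's English description precedes it below -/
import Mathlib

section
/- For all x, y ∈ ℝ^N and t > 0, the Mehler kernel M_t(x,y) := (1 - e^{-2t})^{-N/2} exp( -(e^{-2t}|x|² - 2e^{-t} x·y + e^{-2t}|y|²) / (2(1 - e^{-2t})) ) satisfies M_t(x,y) ≥ (2π)^{N/2} H_t(|x-y|), where H_t(r) := (4πt)^{-N/2} e^{-r²/(4t)} is the Gauss–Weierstrass kernel. -/
open Real
open scoped RealInnerProductSpace

/-- The Mehler kernel of the Ornstein-Uhlenbeck semigroup on ℝ^N. -/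
noncomputable def mehler (N : ℕ) (t : ℝ) (x y : EuclideanSpace ℝ (Fin N)) : ℝ :=
  (1 - exp (-2 * t)) ^ (-(N:ℝ)/2) *
    exp (-(exp (-2 * t) * ‖x‖^2 - 2 * exp (-t) * ⟪x, y⟫ + exp (-2 * t) * ‖y‖^2) /
      (2 * (1 - exp (-2 * t))))

/-- The Gauss–Weierstrass heat kernel on ℝ^N. -/
noncomputable def gaussWeierstrass (N : ℕ) (t r : ℝ) : ℝ :=
  (4 * π * t) ^ (-(N:ℝ)/2) * exp (-r^2 / (4 * t))

/-!
Write `s = e^{-t}`. Since `s² ≤ s`, the quadratic form in the Mehler exponent is at most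
`s ‖x - y‖²`, and `1 - s² ≤ 2t` together with `2t s ≤ 1 - s²` (i.e. `t ≤ sinh t`) compare the
prefactor and the exponent of `M_t` with those of `(2π)^{N/2} H_t = (2t)^{-N/2} e^{-r²/(4t)}`.
-/

lemma inner_form_le_mul_norm_sub_sq {E : Type*} [NormedAddCommGroup E] [InnerProductSpace ℝ E]
    {a b : ℝ} (hab : a ≤ b) (x y : E) :
    a * ‖x‖ ^ 2 - 2 * b * ⟪x, y⟫ + a * ‖y‖ ^ 2 ≤ b * ‖x - y‖ ^ 2 := by
  rw [norm_sub_sq_real]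
  nlinarith [sq_nonneg ‖x‖, sq_nonneg ‖y‖]

lemma one_sub_exp_neg_two_mul_pos {t : ℝ} (ht : 0 < t) : 0 < 1 - exp (-2 * t) := by
  have : exp (-2 * t) < 1 := exp_lt_one_iff.mpr (by linarith)
  linarith

lemma one_sub_exp_neg_two_mul_le (t : ℝ) : 1 - exp (-2 * t) ≤ 2 * t := by
  linarith [add_one_le_exp (-2 * t)]

lemma two_mul_mul_exp_neg_le {t : ℝ} (ht : 0 ≤ t) : 2 * t * exp (-t) ≤ 1 - exp (-2 * t) := by
  have hsinh : 2 * t ≤ exp t - exp (-t) := by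
    have := self_le_sinh_iff.mpr ht
    rw [sinh_eq] at this
    linarith
  calc 2 * t * exp (-t) ≤ (exp t - exp (-t)) * exp (-t) :=
        mul_le_mul_of_nonneg_right hsinh (exp_pos _).le
    _ = 1 - exp (-2 * t) := by
        rw [sub_mul, ← exp_add, ← exp_add, add_neg_cancel, exp_zero]
        ring_nf

lemma exp_neg_div_two_mul_one_sub_le {t : ℝ} (ht : 0 < t) :
    exp (-t) / (2 * (1 - exp (-2 * t))) ≤ 1 / (4 * t) := by
  have := one_sub_exp_neg_two_mul_pos ht
  rw [div_le_div_iff₀ (by positivity) (by positivity)]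
  linarith [two_mul_mul_exp_neg_le ht.le]

lemma two_pi_rpow_mul_gaussWeierstrass (N : ℕ) {t : ℝ} (ht : 0 < t) (r : ℝ) :
    (2 * π) ^ ((N:ℝ)/2) * gaussWeierstrass N t r = (2 * t) ^ (-(N:ℝ)/2) * exp (-r^2 / (4 * t)) := by
  have hπ : 0 < 2 * π := by positivity
  rw [gaussWeierstrass, show 4 * π * t = 2 * π * (2 * t) by ring,
    mul_rpow hπ.le (by positivity), ← mul_assoc, ← mul_assoc, ← rpow_add hπ, neg_div,
    add_neg_cancel, rpow_zero, one_mul]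

theorem mehler_ge_heat_kernel (N : ℕ) (x y : EuclideanSpace ℝ (Fin N)) (t : ℝ) (ht : 0 < t) :
    mehler N t x y ≥ (2 * π) ^ ((N:ℝ)/2) * gaussWeierstrass N t ‖x - y‖ := by
  have hpos := one_sub_exp_neg_two_mul_pos ht
  have hprefactor : (2 * t) ^ (-(N:ℝ)/2) ≤ (1 - exp (-2 * t)) ^ (-(N:ℝ)/2) :=
    rpow_le_rpow_of_nonpos hpos (one_sub_exp_neg_two_mul_le t) (by
      linarith [N.cast_nonneg (α := ℝ)])
  have hexponent : -‖x - y‖ ^ 2 / (4 * t) ≤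
      -(exp (-2 * t) * ‖x‖^2 - 2 * exp (-t) * ⟪x, y⟫ + exp (-2 * t) * ‖y‖^2) /
        (2 * (1 - exp (-2 * t))) := by
    rw [neg_div, neg_div, neg_le_neg_iff]
    calc _ ≤ exp (-t) * ‖x - y‖ ^ 2 / (2 * (1 - exp (-2 * t))) :=
          div_le_div_of_nonneg_right (inner_form_le_mul_norm_sub_sq
            (exp_le_exp.mpr (by linarith)) x y) (by positivity)
      _ = ‖x - y‖ ^ 2 * (exp (-t) / (2 * (1 - exp (-2 * t)))) := by ring
      _ ≤ ‖x - y‖ ^ 2 * (1 / (4 * t)) :=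
          mul_le_mul_of_nonneg_left (exp_neg_div_two_mul_one_sub_le ht) (sq_nonneg _)
      _ = ‖x - y‖ ^ 2 / (4 * t) := by ring
  rw [two_pi_rpow_mul_gaussWeierstrass N ht, mehler, ge_iff_le]
  exact mul_le_mul hprefactor (exp_le_exp.mpr hexponent) (exp_pos _).le (by positivity)
end

section
/- For every s ∈ (0,1) and all x ≠ y in ℝ^N, the kernel K_s(x,y) := ∫_0^∞ M_t(x,y) t^{-(s/2+1)} dt satisfies K_s(x,y) ≥ C_{N,s} |x-y|^{-(N+s)}, where C_{N,s} := 2^{s + N/2} Γ((s+N)/2). -/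
open Real MeasureTheory
open scoped RealInnerProductSpace

/-- The fractional Gaussian kernel given by Bochner subordination. -/
noncomputable def fracKernel (N : ℕ) (s : ℝ) (x y : EuclideanSpace ℝ (Fin N)) : ℝ :=
  ∫ t in Set.Ioi (0:ℝ), mehler N t x y / t ^ (s/2 + 1)

/-!
With `a = e^{-t}`, the exponent of the Mehler kernel is `-(a‖x-y‖² - a(1-a)(‖x‖²+‖y‖²)) / (2(1-a²))`.
Since `2ta ≤ 1 - a² ≤ 2t`, this gives `M_t(x,y) ≥ (2t)^{-N/2} e^{-‖x-y‖²/(4t)}`, and integrating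
the right-hand side against `t^{-(s/2+1)}` is, after `t ↦ 1/t`, a Gamma integral that produces
exactly the constant `2^{s+N/2} Γ((s+N)/2)`. Comparing the integrals requires the Mehler integrand
to be integrable: near `t = 0` it is dominated by a multiple of `t^{-(N+s)/2-1} e^{-c/t}` with
`c = ‖x-y‖²/(4e)`, near `∞` by a multiple of `t^{-(s/2+1)}`.
-/

open Set

theorem integral_rpow_mul_exp_neg_div_Ioi {a c : ℝ} (ha : 0 < a) (hc : 0 < c) :
    ∫ t in Ioi (0:ℝ), t ^ (-a - 1) * exp (-(c / t)) = c ^ (-a) * Gamma a := by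
  rw [rpow_neg hc.le, ← inv_rpow hc.le, ← one_div, ← integral_rpow_mul_exp_neg_mul_Ioi ha hc,
    ← integral_comp_rpow_Ioi (fun u => u ^ (a - 1) * exp (-(c * u))) (p := -1) (by norm_num)]
  refine setIntegral_congr_fun measurableSet_Ioi fun t (ht : 0 < t) => ?_
  rw [smul_eq_mul, rpow_neg_one, inv_rpow ht.le, ← rpow_neg ht.le, abs_neg, abs_one, one_mul,
    ← mul_assoc, ← rpow_add ht, ← div_eq_mul_inv]
  ring_nf

theorem integrableOn_rpow_mul_exp_neg_div_Ioi {a c : ℝ} (ha : 0 < a) (hc : 0 < c) :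
    IntegrableOn (fun t => t ^ (-a - 1) * exp (-(c / t))) (Ioi 0) := by
  refine Integrable.of_integral_ne_zero ?_
  rw [integral_rpow_mul_exp_neg_div_Ioi ha hc]
  exact (mul_pos (rpow_pos_of_pos hc _) (Gamma_pos_of_pos ha)).ne'

theorem integral_rpow_mul_exp_div_rpow_Ioi {n s r : ℝ} (hns : 0 < n + s) (hr : 0 < r) :
    ∫ t in Ioi (0:ℝ), (2 * t) ^ (-n/2) * exp (-r^2 / (4 * t)) / t ^ (s/2 + 1) =
      2 ^ (s + n/2) * Gamma ((s + n)/2) * r ^ (-(n + s)) := by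
  have hint : ∀ t ∈ Ioi (0:ℝ), (2 * t) ^ (-n/2) * exp (-r^2 / (4 * t)) / t ^ (s/2 + 1) =
      2 ^ (-n/2) * (t ^ (-((s + n)/2) - 1) * exp (-((r/2)^2 / t))) := fun t (ht : 0 < t) => by
    rw [mul_rpow zero_le_two ht.le, div_eq_mul_inv, ← rpow_neg ht.le]
    have : t ^ (-((s + n)/2) - 1) = t ^ (-n/2) * t ^ (-(s/2 + 1)) := by
      rw [← rpow_add ht]; ring_nf
    rw [this]; ring_nf
  have ha : 0 < (s + n)/2 := by linarith
  rw [setIntegral_congr_fun measurableSet_Ioi hint, integral_const_mul,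
    integral_rpow_mul_exp_neg_div_Ioi ha (by positivity), ← rpow_natCast,
    ← rpow_mul (by positivity), div_rpow hr.le zero_le_two]
  have h2 : (2:ℝ) ^ (-n/2) / 2 ^ (((2:ℕ):ℝ) * -((s + n)/2)) = 2 ^ (s + n/2) := by
    rw [← rpow_sub two_pos]; push_cast; ring_nf
  have hr2 : r ^ (((2:ℕ):ℝ) * -((s + n)/2)) = r ^ (-(n + s)) := by push_cast; ring_nf
  rw [hr2, ← h2]
  ring

theorem exp_neg_sq (t : ℝ) : exp (-t) ^ 2 = exp (-2 * t) := by rw [← exp_nat_mul]; ring_nf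

theorem mehler_eq (N : ℕ) (t : ℝ) (x y : EuclideanSpace ℝ (Fin N)) :
    mehler N t x y = (1 - exp (-t) ^ 2) ^ (-(N:ℝ)/2) *
      exp ((exp (-t) * (1 - exp (-t)) * (‖x‖^2 + ‖y‖^2) - exp (-t) * ‖x - y‖^2) /
        (2 * (1 - exp (-t) ^ 2))) := by
  rw [mehler, ← exp_neg_sq, norm_sub_sq_real]
  ring_nf

theorem exp_neg_sq_lt_one {t : ℝ} (ht : 0 < t) : exp (-t) ^ 2 < 1 :=
  pow_lt_one₀ (exp_pos _).le (exp_lt_one_iff.mpr (neg_lt_zero.mpr ht)) two_ne_zero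

theorem one_sub_exp_neg_sq_le (t : ℝ) : 1 - exp (-t) ^ 2 ≤ 2 * t := by
  linarith [exp_neg_sq t, add_one_le_exp (-2 * t)]

theorem mul_exp_neg_le_one_sub_exp_neg_sq {t : ℝ} (ht : 0 ≤ t) :
    2 * t * exp (-t) ≤ 1 - exp (-t) ^ 2 := by
  have hsinh : t ≤ sinh t := self_le_sinh_iff.mpr ht
  have : exp t * exp (-t) = 1 := by rw [← exp_add]; simp
  rw [sinh_eq] at hsinh
  nlinarith [exp_pos (-t)]

theorem mul_exp_neg_two_le_one_sub_exp_neg_sq {t : ℝ} (ht0 : 0 ≤ t) (ht1 : t ≤ 1) :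
    2 * exp (-2) * t ≤ 1 - exp (-t) ^ 2 := by
  have h1 := add_one_le_exp (2 * t)
  have h2 : exp (2 * t) * exp (-t) ^ 2 = 1 := by rw [exp_neg_sq, ← exp_add]; simp
  have h3 : exp (-2) ≤ exp (-t) ^ 2 := by rw [exp_neg_sq]; exact exp_le_exp.mpr (by linarith)
  nlinarith [mul_le_mul_of_nonneg_right h3 ht0]

theorem one_sub_exp_neg_two_le_one_sub_exp_neg_sq {t : ℝ} (ht : 1 ≤ t) :
    1 - exp (-2) ≤ 1 - exp (-t) ^ 2 := by
  rw [exp_neg_sq]; linarith [exp_le_exp.mpr (show -2 * t ≤ -2 by linarith)]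

theorem le_mehler (N : ℕ) {t : ℝ} (ht : 0 < t) (x y : EuclideanSpace ℝ (Fin N)) :
    (2 * t) ^ (-(N:ℝ)/2) * exp (-‖x - y‖^2 / (4 * t)) ≤ mehler N t x y := by
  have h1 := sub_pos.mpr (exp_neg_sq_lt_one ht)
  have h2 := one_sub_exp_neg_sq_le t
  have h3 := mul_exp_neg_le_one_sub_exp_neg_sq ht.le
  rw [mehler_eq]
  set a := exp (-t)
  have ha0 : 0 < a := exp_pos _
  have ha1 : a ≤ 1 := exp_le_one_iff.mpr (by linarith)
  gcongr ?_ * exp ?_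
  · exact rpow_le_rpow_of_nonpos h1 h2 (by rw [neg_div]; exact neg_nonpos.mpr (by positivity))
  · rw [neg_div, ← sub_nonneg, sub_neg_eq_add, div_add_div _ _ (by positivity) (by positivity)]
    apply div_nonneg _ (by positivity)
    nlinarith [mul_le_mul_of_nonneg_right h3 (sq_nonneg ‖x - y‖),
      mul_nonneg (mul_nonneg ha0.le (sub_nonneg.mpr ha1)) (by positivity : 0 ≤ ‖x‖^2 + ‖y‖^2)]

theorem mehler_nonneg (N : ℕ) {t : ℝ} (ht : 0 < t) (x y : EuclideanSpace ℝ (Fin N)) :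
    0 ≤ mehler N t x y := by
  have := sub_pos.mpr (exp_neg_sq_lt_one ht)
  rw [mehler_eq]
  positivity

theorem mehler_le (N : ℕ) {t : ℝ} (ht : 0 < t) (x y : EuclideanSpace ℝ (Fin N)) :
    mehler N t x y ≤ (1 - exp (-t) ^ 2) ^ (-(N:ℝ)/2) *
      exp ((‖x‖^2 + ‖y‖^2) / 2 - exp (-t) * ‖x - y‖^2 / (2 * (1 - exp (-t) ^ 2))) := by
  have h1 := sub_pos.mpr (exp_neg_sq_lt_one ht)
  rw [mehler_eq]
  set a := exp (-t)
  have ha0 : 0 < a := exp_pos _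
  have ha1 : a ≤ 1 := exp_le_one_iff.mpr (by linarith)
  gcongr _ * exp ?_
  rw [sub_div]
  refine sub_le_sub_right ?_ _
  rw [div_le_div_iff₀ (by positivity) two_pos]
  nlinarith [mul_nonneg (sub_nonneg.mpr ha1) (by positivity : 0 ≤ ‖x‖^2 + ‖y‖^2)]

theorem mehler_le_of_le_one (N : ℕ) {t : ℝ} (ht0 : 0 < t) (ht1 : t ≤ 1)
    (x y : EuclideanSpace ℝ (Fin N)) :
    mehler N t x y ≤ (2 * exp (-2)) ^ (-(N:ℝ)/2) * exp ((‖x‖^2 + ‖y‖^2) / 2) *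
      (t ^ (-(N:ℝ)/2) * exp (-(‖x - y‖^2 / (4 * exp 1) / t))) := by
  have h1 := sub_pos.mpr (exp_neg_sq_lt_one ht0)
  have h2 := one_sub_exp_neg_sq_le t
  have h3 := mul_exp_neg_two_le_one_sub_exp_neg_sq ht0.le ht1
  have hae : 1 ≤ exp (-t) * exp 1 := by rw [← exp_add]; exact one_le_exp (by linarith)
  refine (mehler_le N ht0 x y).trans ?_
  rw [mul_mul_mul_comm, ← mul_rpow (by positivity) ht0.le, ← exp_add]
  gcongr ?_ * exp ?_
  · exact rpow_le_rpow_of_nonpos (by positivity) h3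
      (by rw [neg_div]; exact neg_nonpos.mpr (by positivity))
  · rw [← sub_eq_add_neg]
    refine sub_le_sub_left ?_ _
    rw [div_div, div_le_div_iff₀ (by positivity) (by positivity)]
    nlinarith [mul_le_mul_of_nonneg_left h2 (sq_nonneg ‖x - y‖),
      mul_le_mul_of_nonneg_left hae (by positivity : 0 ≤ 4 * t * ‖x - y‖^2)]

theorem mehler_le_of_one_le (N : ℕ) {t : ℝ} (ht : 1 ≤ t) (x y : EuclideanSpace ℝ (Fin N)) :
    mehler N t x y ≤ (1 - exp (-2)) ^ (-(N:ℝ)/2) * exp ((‖x‖^2 + ‖y‖^2) / 2) := by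
  have ht0 : 0 < t := by linarith
  have h1 := sub_pos.mpr (exp_neg_sq_lt_one ht0)
  have h2 : 0 < 1 - exp (-2) := by linarith [exp_lt_one_iff.mpr (show (-2:ℝ) < 0 by norm_num)]
  refine (mehler_le N ht0 x y).trans ?_
  gcongr ?_ * exp ?_
  · exact rpow_le_rpow_of_nonpos h2 (one_sub_exp_neg_two_le_one_sub_exp_neg_sq ht)
      (by rw [neg_div]; exact neg_nonpos.mpr (by positivity))
  · exact sub_le_self _ (by positivity)

theorem integrableOn_mehler_div_rpow (N : ℕ) {s : ℝ} (hs : 0 < s)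
    {x y : EuclideanSpace ℝ (Fin N)} (hxy : x ≠ y) :
    IntegrableOn (fun t => mehler N t x y / t ^ (s/2 + 1)) (Ioi 0) := by
  have hmeas : Measurable (fun t => mehler N t x y / t ^ (s/2 + 1)) := by
    unfold mehler; fun_prop
  have hr : 0 < ‖x - y‖ := norm_sub_pos_iff.mpr hxy
  have hnorm : ∀ t : ℝ, 0 < t →
      ‖mehler N t x y / t ^ (s/2 + 1)‖ = mehler N t x y / t ^ (s/2 + 1) :=
    fun t ht => norm_of_nonneg (div_nonneg (mehler_nonneg N ht x y) (rpow_nonneg ht.le _))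
  rw [← Ioc_union_Ioi_eq_Ioi zero_le_one]
  refine IntegrableOn.union ?_ ?_
  · refine (((integrableOn_rpow_mul_exp_neg_div_Ioi (a := (N + s)/2) (by positivity)
      (show 0 < ‖x - y‖^2 / (4 * exp 1) by positivity)).mono_set Ioc_subset_Ioi_self).const_mul
      ((2 * exp (-2)) ^ (-(N:ℝ)/2) * exp ((‖x‖^2 + ‖y‖^2) / 2))).mono'
      hmeas.aestronglyMeasurable ?_
    filter_upwards [ae_restrict_mem measurableSet_Ioc] with t ⟨ht0, ht1⟩
    rw [hnorm t ht0, div_le_iff₀ (rpow_pos_of_pos ht0 _)]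
    refine (mehler_le_of_le_one N ht0 ht1 x y).trans_eq ?_
    have : t ^ (-(N:ℝ)/2) = t ^ (-((N + s)/2) - 1) * t ^ (s/2 + 1) := by
      rw [← rpow_add ht0]; ring_nf
    rw [this]; ring
  · refine ((integrableOn_Ioi_rpow_of_lt (a := -(s/2 + 1)) (by linarith) one_pos).const_mul
      ((1 - exp (-2)) ^ (-(N:ℝ)/2) * exp ((‖x‖^2 + ‖y‖^2) / 2))).mono'
      hmeas.aestronglyMeasurable ?_
    filter_upwards [ae_restrict_mem measurableSet_Ioi] with t (ht : 1 < t)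
    have ht0 : 0 < t := one_pos.trans ht
    rw [hnorm t ht0, rpow_neg ht0.le, ← div_eq_mul_inv]
    exact div_le_div_of_nonneg_right (mehler_le_of_one_le N ht.le x y) (rpow_nonneg ht0.le _)

theorem fracKernel_lower_bound (N : ℕ) (s : ℝ) (hs : s ∈ Set.Ioo (0:ℝ) 1)
    (x y : EuclideanSpace ℝ (Fin N)) (hxy : x ≠ y) :
    fracKernel N s x y ≥
      2 ^ (s + (N:ℝ)/2) * Real.Gamma ((s + N) / 2) * ‖x - y‖ ^ (-((N:ℝ) + s)) := by
  obtain ⟨hs0, -⟩ := hs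
  have hr : 0 < ‖x - y‖ := norm_sub_pos_iff.mpr hxy
  rw [ge_iff_le, ← integral_rpow_mul_exp_div_rpow_Ioi (by positivity) hr]
  refine integral_mono_of_nonneg ?_ (integrableOn_mehler_div_rpow N hs0 hxy) ?_
  all_goals filter_upwards [ae_restrict_mem measurableSet_Ioi] with t (ht : 0 < t)
  · positivity
  · exact div_le_div_of_nonneg_right (le_mehler N ht x y) (rpow_nonneg ht.le _)
end
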